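/- arXiv:2204.05940 — 4 statements merged into one kernel-verified Lean document; each statement's English description precedes it below -/
import Mathlib

section
/- Let C be a finite-dimensional coalgebra over ℂ, let W be a finite-dimensional complex vector space, and let ψ : C* → End(W) be an injective homomorphism of unital ℂ-algebras from the convolution algebra C* to the endomorphism algebra of W. Then for every x ∈ C there exists an endomorphism b(x) ∈ End(W) such that for every n ≥ 1 and all f₁, …, fₙ ∈ C* one has (f₁ ∗ f₂ ∗ ⋯ ∗ fₙ)(x) = Tr(b(x) ∘ ψ(f₁) ∘ ψ(f₂) ∘ ⋯ ∘ ψ(fₙ)); equivalently, the n-fold iterated comultiplication of x is represented as a matrix product state with boundary matrix b(x) and site tensor Σ_{y∈B} y ⊗ ψ(δ_y) for any basis B of C with dual basis (δ_y). -/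
/-!
STATEMENT 0: Let `C` be a finite-dimensional coalgebra over `ℂ`, `W` a finite-dimensional
complex vector space, and `ψ : C* → End W` an injective homomorphism of unital `ℂ`-algebras
from the convolution algebra `C*` to the endomorphism algebra of `W`.  Then for every `x ∈ C`
there is `b x ∈ End W` such that for every `n ≥ 1` and all `f₁, …, fₙ ∈ C*`,
`(f₁ ∗ ⋯ ∗ fₙ) x = Tr (b x ∘ ψ f₁ ∘ ⋯ ∘ ψ fₙ)`.
-/

open TensorProduct

noncomputable section

/-- The convolution product on the dual of a coalgebra:
`(f ∗ g) x = Σ_{(x)} f x₍₁₎ * g x₍₂₎`.  The counit `ε` is its unit. -/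
def conv {C : Type*} [AddCommGroup C] [Module ℂ C] [Coalgebra ℂ C]
    (f g : Module.Dual ℂ C) : Module.Dual ℂ C :=
  LinearMap.mul' ℂ ℂ ∘ₗ TensorProduct.map f g ∘ₗ Coalgebra.comul

/-- Every linear functional on `End W` (for `W` finite dimensional) is of the form
`a ↦ Tr (b * a)` for some `b : End W`. -/
lemma exists_trace_rep {W : Type*} [AddCommGroup W] [Module ℂ W] [FiniteDimensional ℂ W]
    (φ : Module.End ℂ W →ₗ[ℂ] ℂ) :
    ∃ b : Module.End ℂ W, ∀ a : Module.End ℂ W, φ a = LinearMap.trace ℂ W (b * a) := by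
  let s := Module.finBasis ℂ W
  let e := LinearMap.toMatrixAlgEquiv s
  refine ⟨e.symm (Matrix.of fun i j => φ (e.symm (Matrix.single j i 1))), fun a => ?_⟩
  have he : ∀ a : Module.End ℂ W, LinearMap.toMatrix s s a = e a := fun _ => rfl
  rw [LinearMap.trace_eq_matrix_trace ℂ s, he, map_mul, AlgEquiv.apply_symm_apply]
  have ha : a = e.symm (e a) := (AlgEquiv.symm_apply_apply e a).symm
  set M := e a with hM
  have expand : φ a = ∑ j, ∑ i, M j i * φ (e.symm (Matrix.single j i 1)) := by
    conv_lhs => rw [ha, Matrix.matrix_eq_sum_single M]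
    rw [map_sum, map_sum]
    refine Finset.sum_congr rfl fun j _ => ?_
    rw [map_sum, map_sum]
    refine Finset.sum_congr rfl fun i _ => ?_
    have hsm : Matrix.single j i (M j i) = M j i • Matrix.single j i 1 := by
      ext k l
      simp [Matrix.single, Matrix.smul_apply]
    rw [hsm, map_smul, map_smul, smul_eq_mul]
  rw [expand, Matrix.trace]
  rw [Finset.sum_comm]
  refine Finset.sum_congr rfl fun j _ => ?_
  refine Finset.sum_congr rfl fun i _ => ?_
  simp [Matrix.diag, Matrix.mul_apply, Matrix.single, mul_comm]

theorem mps_representation_of_coalgebra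
    {C W : Type*} [AddCommGroup C] [Module ℂ C] [Coalgebra ℂ C] [FiniteDimensional ℂ C]
    [AddCommGroup W] [Module ℂ W] [FiniteDimensional ℂ W]
    -- `ψ` is a homomorphism of unital `ℂ`-algebras from the convolution algebra `C*`
    -- to `End W`(`ℂ`-linear, unital, multiplicative), and it is injective:
    (ψ : Module.Dual ℂ C →ₗ[ℂ] Module.End ℂ W)
    (hψone : ψ Coalgebra.counit = 1)
    (hψmul : ∀ f g : Module.Dual ℂ C, ψ (conv f g) = ψ f * ψ g)
    (hψinj : Function.Injective ψ) :
    ∀ x : C, ∃ b : Module.End ℂ W, ∀ n : ℕ, 1 ≤ n → ∀ f : Fin n → Module.Dual ℂ C,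
      -- `f₁ ∗ f₂ ∗ ⋯ ∗ fₙ` (the trailing unit `ε` of the fold is the convolution unit)
      ((List.ofFn f).foldr conv Coalgebra.counit) x =
        -- `Tr (b x ∘ ψ f₁ ∘ ψ f₂ ∘ ⋯ ∘ ψ fₙ)` (in `End W`, `*` is composition)
        LinearMap.trace ℂ W (b * (List.ofFn fun i => ψ (f i)).prod) := by
  intro x
  obtain ⟨r, hr⟩ := ψ.exists_leftInverse_of_injective (LinearMap.ker_eq_bot.mpr hψinj)
  obtain ⟨b, hb⟩ := exists_trace_rep ((Module.Dual.eval ℂ C x) ∘ₗ r)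
  refine ⟨b, fun n _ f => ?_⟩
  have key : ∀ l : List (Module.Dual ℂ C),
      ψ (l.foldr conv Coalgebra.counit) = (l.map ψ).prod := by
    intro l
    induction l with
    | nil => simpa using hψone
    | cons h t ih => simp [hψmul, ih]
  have hfold : (List.ofFn fun i => ψ (f i)) = (List.ofFn f).map ψ := by
    rw [List.map_ofFn]; rfl
  rw [hfold, ← key]
  have := hb (ψ ((List.ofFn f).foldr conv Coalgebra.counit))
  rw [← this]
  simp only [LinearMap.coe_comp, Function.comp_apply]
  rw [show r (ψ ((List.ofFn f).foldr conv Coalgebra.counit))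
      = (List.ofFn f).foldr conv Coalgebra.counit from by
    have := LinearMap.congr_fun hr ((List.ofFn f).foldr conv Coalgebra.counit)
    simpa using this]
  rfl

end
end

section
/- Let A be a pre-bialgebra over ℂ satisfying the unit axiom, and set t := Σ_{(1)} 1₍₁₎·1₍₂₎ ∈ A (the multiplication map applied to Δ(1)). Then Δ(1)·Δ_op(1) = Δ_op(1)·Δ(1) in A⊗A, and Δ(t) = Δ(1)·Δ_op(1). -/
/-!
STATEMENT 3: Let `A` be a pre-bialgebra over `ℂ` satisfying the unit axiom, and set
`t := Σ_{(1)} 1₍₁₎ · 1₍₂₎` (the multiplication map applied to `Δ 1`).  Then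
`Δ 1 * Δop 1 = Δop 1 * Δ 1` in `A ⊗ A`, and `Δ t = Δ 1 * Δop 1`.

A pre-bialgebra is a finite-dimensional unital associative `ℂ`-algebra that is also a
coassociative counital `ℂ`-coalgebra such that `Δ` is multiplicative (`Δ 1 = 1 ⊗ 1` is NOT
required).  `A ⊗ A` and `A ⊗ (A ⊗ A)` carry the componentwise product.  The unit axiom is
`Δ² 1 = (1 ⊗ Δ 1) * (Δ 1 ⊗ 1) = (Δ 1 ⊗ 1) * (1 ⊗ Δ 1)` where `Δ² = (Δ ⊗ id) ∘ Δ`.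
-/

open TensorProduct

set_option synthInstance.maxHeartbeats 1000000
noncomputable section

namespace PreBialgebraAux

variable {A : Type*} [Ring A] [Algebra ℂ A]

/-- `u ⊗ (v ⊗ w) ↦ v ⊗ (w * u)`. -/
def phi : A ⊗[ℂ] (A ⊗[ℂ] A) →ₗ[ℂ] A ⊗[ℂ] A :=
  (LinearMap.lTensor A (LinearMap.mul' ℂ A)) ∘ₗ
    (LinearMap.lTensor A (TensorProduct.comm ℂ A A).toLinearMap) ∘ₗ
      (TensorProduct.leftComm ℂ A A A).toLinearMap

@[simp] lemma phi_tmul (u v w : A) :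
    phi (u ⊗ₜ[ℂ] (v ⊗ₜ[ℂ] w)) = v ⊗ₜ[ℂ] (w * u) := by
  simp [phi]

/-- `u ⊗ V ↦ (1 ⊗ u) * V`. -/
def lam : A ⊗[ℂ] (A ⊗[ℂ] A) →ₗ[ℂ] A ⊗[ℂ] A :=
  (LinearMap.mul' ℂ (A ⊗[ℂ] A)) ∘ₗ
    (LinearMap.rTensor (A ⊗[ℂ] A) ((TensorProduct.mk ℂ A A) 1))

@[simp] lemma lam_tmul (u : A) (V : A ⊗[ℂ] A) :
    lam (u ⊗ₜ[ℂ] V) = ((1 : A) ⊗ₜ[ℂ] u) * V := by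
  simp [lam]

section coalg
variable [Coalgebra ℂ A]

/-- `X ⊗ y ↦ X * Δ y`. -/
def theta : (A ⊗[ℂ] A) ⊗[ℂ] A →ₗ[ℂ] A ⊗[ℂ] A :=
  (LinearMap.mul' ℂ (A ⊗[ℂ] A)) ∘ₗ
    (LinearMap.lTensor (A ⊗[ℂ] A) (Coalgebra.comul (R := ℂ)))

@[simp] lemma theta_tmul (X : A ⊗[ℂ] A) (y : A) :
    theta (X ⊗ₜ[ℂ] y) = X * Coalgebra.comul y := by
  simp [theta]

end coalg

lemma comm_mul (X Y : A ⊗[ℂ] A) :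
    (TensorProduct.comm ℂ A A) (X * Y)
      = (TensorProduct.comm ℂ A A) X * (TensorProduct.comm ℂ A A) Y := by
  induction X using TensorProduct.induction_on with
  | zero => simp
  | tmul a b =>
    induction Y using TensorProduct.induction_on with
    | zero => simp
    | tmul c d => simp [Algebra.TensorProduct.tmul_mul_tmul]
    | add Y₁ Y₂ h₁ h₂ => simp [mul_add, h₁, h₂]
  | add X₁ X₂ h₁ h₂ => simp [add_mul, h₁, h₂]

lemma comm_comm (X : A ⊗[ℂ] A) :
    (TensorProduct.comm ℂ A A) ((TensorProduct.comm ℂ A A) X) = X := by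
  induction X using TensorProduct.induction_on with
  | zero => simp
  | tmul a b => simp
  | add X₁ X₂ h₁ h₂ => simp [h₁, h₂]

lemma key1 (X Y : A ⊗[ℂ] A) :
    phi (((1 : A) ⊗ₜ[ℂ] X) * (TensorProduct.assoc ℂ A A A (Y ⊗ₜ[ℂ] (1 : A))))
      = X * (TensorProduct.comm ℂ A A) Y := by
  induction X using TensorProduct.induction_on with
  | zero => simp
  | tmul a b =>
    induction Y using TensorProduct.induction_on with
    | zero => simp
    | tmul c d =>
      simp [Algebra.TensorProduct.tmul_mul_tmul]
    | add Y₁ Y₂ h₁ h₂ =>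
      simp only [add_tmul, map_add, mul_add, h₁, h₂]
  | add X₁ X₂ h₁ h₂ =>
    simp only [tmul_add, add_mul, mul_add, map_add, h₁, h₂]

lemma key2 (X Y : A ⊗[ℂ] A) :
    (TensorProduct.comm ℂ A A)
        (phi ((TensorProduct.assoc ℂ A A A (X ⊗ₜ[ℂ] (1 : A))) * ((1 : A) ⊗ₜ[ℂ] Y)))
      = phi ((TensorProduct.assoc ℂ A A A (Y ⊗ₜ[ℂ] (1 : A))) * ((1 : A) ⊗ₜ[ℂ] X)) := by
  induction X using TensorProduct.induction_on with
  | zero => simp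
  | tmul a b =>
    induction Y using TensorProduct.induction_on with
    | zero => simp
    | tmul c d =>
      simp [Algebra.TensorProduct.tmul_mul_tmul]
    | add Y₁ Y₂ h₁ h₂ =>
      simp only [add_tmul, tmul_add, map_add, mul_add, add_mul, h₁, h₂]
  | add X₁ X₂ h₁ h₂ =>
    simp only [add_tmul, tmul_add, map_add, mul_add, add_mul, h₁, h₂]

lemma key3 [Coalgebra ℂ A]
    (hmul : ∀ x y : A,
      Coalgebra.comul (R := ℂ) (x * y) = Coalgebra.comul x * Coalgebra.comul y)
    (X : A ⊗[ℂ] A) :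
    Coalgebra.comul (R := ℂ) (LinearMap.mul' ℂ A X)
      = theta (LinearMap.rTensor A (Coalgebra.comul (R := ℂ)) X) := by
  induction X using TensorProduct.induction_on with
  | zero => simp
  | tmul a b => simp [hmul a b]
  | add X₁ X₂ h₁ h₂ => simp only [map_add, h₁, h₂]

lemma key4 [Coalgebra ℂ A] (X Y : A ⊗[ℂ] A) :
    theta ((TensorProduct.assoc ℂ A A A).symm
        ((TensorProduct.assoc ℂ A A A (X ⊗ₜ[ℂ] (1 : A))) * ((1 : A) ⊗ₜ[ℂ] Y)))
      = X * lam (LinearMap.lTensor A (Coalgebra.comul (R := ℂ)) Y) := by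
  induction X using TensorProduct.induction_on with
  | zero => simp
  | tmul a b =>
    induction Y using TensorProduct.induction_on with
    | zero => simp
    | tmul c d =>
      simp only [assoc_tmul, Algebra.TensorProduct.tmul_mul_tmul, one_mul, mul_one,
        assoc_symm_tmul, theta_tmul, LinearMap.lTensor_tmul, lam_tmul]
      rw [← mul_assoc, Algebra.TensorProduct.tmul_mul_tmul, mul_one]
    | add Y₁ Y₂ h₁ h₂ =>
      simp only [add_tmul, tmul_add, map_add, mul_add, add_mul, h₁, h₂]
  | add X₁ X₂ h₁ h₂ =>
    simp only [add_tmul, tmul_add, map_add, mul_add, add_mul, h₁, h₂]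

lemma key5 (X Y : A ⊗[ℂ] A) :
    lam ((TensorProduct.assoc ℂ A A A (X ⊗ₜ[ℂ] (1 : A))) * ((1 : A) ⊗ₜ[ℂ] Y))
      = (TensorProduct.comm ℂ A A) X * Y := by
  induction X using TensorProduct.induction_on with
  | zero => simp
  | tmul a b =>
    induction Y using TensorProduct.induction_on with
    | zero => simp
    | tmul c d =>
      simp [Algebra.TensorProduct.tmul_mul_tmul]
    | add Y₁ Y₂ h₁ h₂ =>
      simp only [add_tmul, tmul_add, map_add, mul_add, add_mul, h₁, h₂]
  | add X₁ X₂ h₁ h₂ =>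
    simp only [add_tmul, tmul_add, map_add, mul_add, add_mul, h₁, h₂]

end PreBialgebraAux

open PreBialgebraAux

theorem comul_one_mul_comulop_one
    {A : Type*} [Ring A] [Algebra ℂ A] [FiniteDimensional ℂ A] [Coalgebra ℂ A]
    -- the comultiplication is multiplicative (pre-bialgebra condition):
    (hmul : ∀ x y : A,
      Coalgebra.comul (R := ℂ) (x * y) = Coalgebra.comul x * Coalgebra.comul y)
    -- the unit axiom `(Δ ⊗ id) (Δ 1) = (1 ⊗ Δ 1) * (Δ 1 ⊗ 1) = (Δ 1 ⊗ 1) * (1 ⊗ Δ 1)`,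
    -- stated in `A ⊗ (A ⊗ A)`:
    (hunit₁ : (TensorProduct.assoc ℂ A A A)
        (LinearMap.rTensor A (Coalgebra.comul (R := ℂ)) (Coalgebra.comul (1 : A)))
      = ((1 : A) ⊗ₜ[ℂ] Coalgebra.comul (1 : A)) *
          ((TensorProduct.assoc ℂ A A A) (Coalgebra.comul (1 : A) ⊗ₜ[ℂ] (1 : A))))
    (hunit₂ : (TensorProduct.assoc ℂ A A A)
        (LinearMap.rTensor A (Coalgebra.comul (R := ℂ)) (Coalgebra.comul (1 : A)))
      = ((TensorProduct.assoc ℂ A A A) (Coalgebra.comul (1 : A) ⊗ₜ[ℂ] (1 : A))) *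
          ((1 : A) ⊗ₜ[ℂ] Coalgebra.comul (1 : A))) :
    -- `t := Σ_{(1)} 1₍₁₎ · 1₍₂₎`:
    Coalgebra.comul (1 : A) * (TensorProduct.comm ℂ A A) (Coalgebra.comul (1 : A))
        = (TensorProduct.comm ℂ A A) (Coalgebra.comul (1 : A)) * Coalgebra.comul (1 : A) ∧
    Coalgebra.comul (R := ℂ) (LinearMap.mul' ℂ A (Coalgebra.comul (1 : A)))
        = Coalgebra.comul (1 : A) * (TensorProduct.comm ℂ A A) (Coalgebra.comul (1 : A)) := by
  set E : A ⊗[ℂ] A := Coalgebra.comul (1 : A) with hE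
  set G : A ⊗[ℂ] A := (TensorProduct.comm ℂ A A) E with hG
  -- F1 = F2
  have hF : ((1 : A) ⊗ₜ[ℂ] E) * ((TensorProduct.assoc ℂ A A A) (E ⊗ₜ[ℂ] (1 : A)))
      = ((TensorProduct.assoc ℂ A A A) (E ⊗ₜ[ℂ] (1 : A))) * ((1 : A) ⊗ₜ[ℂ] E) :=
    hunit₁.symm.trans hunit₂
  -- E * G = φ(F2)
  have hEG : E * G
      = phi (((TensorProduct.assoc ℂ A A A) (E ⊗ₜ[ℂ] (1 : A))) * ((1 : A) ⊗ₜ[ℂ] E)) := by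
    rw [← hF, key1]
  -- symmetry of φ(F2)
  have hsym := key2 (A := A) E E
  -- goal 1
  have hcomm : E * G = G * E := by
    have h1 : (TensorProduct.comm ℂ A A) (E * G) = E * G := by
      rw [hEG, hsym]
    calc E * G = (TensorProduct.comm ℂ A A) (E * G) := h1.symm
      _ = (TensorProduct.comm ℂ A A) E * (TensorProduct.comm ℂ A A) G := comm_mul E G
      _ = G * E := by rw [← hG, hG, comm_comm]
  refine ⟨hcomm, ?_⟩
  -- E is idempotent
  have hE2 : E * E = E := by
    have := hmul 1 1
    rw [one_mul] at this
    exact this.symm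
  -- coassociativity at 1
  have hco : LinearMap.lTensor A (Coalgebra.comul (R := ℂ)) E
      = (TensorProduct.assoc ℂ A A A)
          (LinearMap.rTensor A (Coalgebra.comul (R := ℂ)) E) :=
    (Coalgebra.coassoc_apply (1 : A)).symm
  have hΔt : Coalgebra.comul (R := ℂ) (LinearMap.mul' ℂ A E)
      = E * (G * E) := by
    rw [key3 hmul]
    have hr : LinearMap.rTensor A (Coalgebra.comul (R := ℂ)) E
        = (TensorProduct.assoc ℂ A A A).symm
            (((TensorProduct.assoc ℂ A A A) (E ⊗ₜ[ℂ] (1 : A))) * ((1 : A) ⊗ₜ[ℂ] E)) := by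
      rw [← hunit₂, LinearEquiv.symm_apply_apply]
    rw [hr, key4, hco, hunit₂, key5, ← hG]
  rw [hΔt, ← mul_assoc, hcomm, mul_assoc, hE2, ← hcomm]

end
end

section
/- Let A be a pre-bialgebra over ℂ satisfying the unit axiom, and set t := Σ_{(1)} 1₍₁₎·1₍₂₎ ∈ A. Then t is cocentral, i.e. flip(Δ(t)) = Δ(t), and t is idempotent, i.e. t·t = t. -/
/-!
STATEMENT 4: Let `A` be a pre-bialgebra over `ℂ` satisfying the unit axiom, and set
`t := Σ_{(1)} 1₍₁₎ · 1₍₂₎`.  Then `t` is cocentral, i.e. `flip (Δ t) = Δ t`, and `t` is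
idempotent, i.e. `t * t = t`.
-/

open TensorProduct

noncomputable section

set_option linter.unusedSectionVars false
set_option synthInstance.maxHeartbeats 400000
set_option maxHeartbeats 1000000
namespace PreBialgebraAux4
variable {A : Type*} [Ring A] [Algebra ℂ A] [Coalgebra ℂ A]

def c1 : A ⊗[ℂ] (A ⊗[ℂ] A) →ₗ[ℂ] A ⊗[ℂ] A :=
  LinearMap.lTensor A (LinearMap.mul' ℂ A) ∘ₗ
    (TensorProduct.assoc ℂ A A A).toLinearMap ∘ₗ
    LinearMap.rTensor A (TensorProduct.comm ℂ A A).toLinearMap ∘ₗ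
    (TensorProduct.assoc ℂ A A A).symm.toLinearMap

@[simp] lemma c1_tmul (a b c : A) : c1 (a ⊗ₜ[ℂ] (b ⊗ₜ[ℂ] c)) = b ⊗ₜ[ℂ] (a * c) := by
  simp [c1]

def Mmap : A ⊗[ℂ] (A ⊗[ℂ] (A ⊗[ℂ] A)) →ₗ[ℂ] A ⊗[ℂ] A :=
  TensorProduct.map (LinearMap.mul' ℂ A) (LinearMap.mul' ℂ A) ∘ₗ
    (TensorProduct.assoc ℂ A A (A ⊗[ℂ] A)).symm.toLinearMap ∘ₗ
    LinearMap.lTensor A (TensorProduct.leftComm ℂ A A A).toLinearMap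

@[simp] lemma Mmap_tmul (a b c d : A) :
    Mmap (a ⊗ₜ[ℂ] (b ⊗ₜ[ℂ] (c ⊗ₜ[ℂ] d))) = (a * c) ⊗ₜ[ℂ] (b * d) := by
  simp [Mmap, TensorProduct.leftComm_tmul]

def mu3 : A ⊗[ℂ] (A ⊗[ℂ] A) →ₗ[ℂ] A :=
  LinearMap.mul' ℂ A ∘ₗ LinearMap.lTensor A (LinearMap.mul' ℂ A)

@[simp] lemma mu3_tmul (a b c : A) : mu3 (a ⊗ₜ[ℂ] (b ⊗ₜ[ℂ] c)) = a * (b * c) := by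
  simp [mu3]

lemma comm_mul (x y : A ⊗[ℂ] A) :
    TensorProduct.comm ℂ A A (x * y)
      = TensorProduct.comm ℂ A A x * TensorProduct.comm ℂ A A y := by
  induction x using TensorProduct.induction_on with
  | zero => simp
  | tmul a b =>
    induction y using TensorProduct.induction_on with
    | zero => simp
    | tmul c d => simp [Algebra.TensorProduct.tmul_mul_tmul]
    | add x y hx hy => simp [mul_add, hx, hy]
  | add x y hx hy => simp [add_mul, hx, hy]

lemma L1 (u v : A ⊗[ℂ] A) :
    mu3 ((TensorProduct.assoc ℂ A A A) (u ⊗ₜ[ℂ] (1 : A)) * ((1 : A) ⊗ₜ[ℂ] v))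
      = LinearMap.mul' ℂ A u * LinearMap.mul' ℂ A v := by
  induction u using TensorProduct.induction_on with
  | zero => simp
  | tmul a b =>
    induction v using TensorProduct.induction_on with
    | zero => simp
    | tmul c d =>
      simp [assoc_tmul, Algebra.TensorProduct.tmul_mul_tmul, mul_assoc]
    | add x y hx hy => simp only [tmul_add, add_tmul, map_add, mul_add, add_mul, hx, hy]
  | add x y hx hy => simp only [tmul_add, add_tmul, map_add, mul_add, add_mul, hx, hy]

lemma L2 (u v : A ⊗[ℂ] A) :
    mu3 (((1 : A) ⊗ₜ[ℂ] v) * (TensorProduct.assoc ℂ A A A) (u ⊗ₜ[ℂ] (1 : A)))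
      = LinearMap.mul' ℂ A (u * v) := by
  induction u using TensorProduct.induction_on with
  | zero => simp
  | tmul a b =>
    induction v using TensorProduct.induction_on with
    | zero => simp
    | tmul c d =>
      simp [assoc_tmul, Algebra.TensorProduct.tmul_mul_tmul, mul_assoc]
    | add x y hx hy => simp only [tmul_add, add_tmul, map_add, mul_add, add_mul, hx, hy]
  | add x y hx hy => simp only [tmul_add, add_tmul, map_add, mul_add, add_mul, hx, hy]

lemma L3 (u v : A ⊗[ℂ] A) :
    TensorProduct.comm ℂ A A
        (c1 (((1 : A) ⊗ₜ[ℂ] v) * (TensorProduct.assoc ℂ A A A) (u ⊗ₜ[ℂ] (1 : A))))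
      = c1 (((1 : A) ⊗ₜ[ℂ] u) * (TensorProduct.assoc ℂ A A A) (v ⊗ₜ[ℂ] (1 : A))) := by
  induction u using TensorProduct.induction_on with
  | zero => simp
  | tmul a b =>
    induction v using TensorProduct.induction_on with
    | zero => simp
    | tmul c d =>
      simp [assoc_tmul, Algebra.TensorProduct.tmul_mul_tmul]
    | add x y hx hy => simp only [tmul_add, add_tmul, map_add, mul_add, add_mul, hx, hy]
  | add x y hx hy => simp only [tmul_add, add_tmul, map_add, mul_add, add_mul, hx, hy]


lemma comm_comm (x : A ⊗[ℂ] A) :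
    TensorProduct.comm ℂ A A (TensorProduct.comm ℂ A A x) = x := by
  induction x using TensorProduct.induction_on with
  | zero => simp
  | tmul a b => simp
  | add x y hx hy => simp [hx, hy]

lemma L5 (hmul : ∀ x y : A,
      Coalgebra.comul (R := ℂ) (x * y) = Coalgebra.comul x * Coalgebra.comul y)
    (u : A ⊗[ℂ] A) :
    Coalgebra.comul (R := ℂ) (LinearMap.mul' ℂ A u)
      = LinearMap.mul' ℂ (A ⊗[ℂ] A)
          (TensorProduct.map (Coalgebra.comul (R := ℂ)) (Coalgebra.comul (R := ℂ)) u) := by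
  induction u using TensorProduct.induction_on with
  | zero => simp
  | tmul a b => simp [LinearMap.mul'_apply, hmul]
  | add x y hx hy => simp only [map_add, hx, hy]

lemma L6 (x y : A ⊗[ℂ] A) :
    x * y = Mmap ((TensorProduct.assoc ℂ A A (A ⊗[ℂ] A)) (x ⊗ₜ[ℂ] y)) := by
  induction x using TensorProduct.induction_on with
  | zero => simp
  | tmul p q =>
    induction y using TensorProduct.induction_on with
    | zero => simp
    | tmul r s => simp [Algebra.TensorProduct.tmul_mul_tmul]
    | add x y hx hy => simp only [tmul_add, add_tmul, map_add, mul_add, add_mul, hx, hy]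
  | add x y hx hy => simp only [tmul_add, add_tmul, map_add, mul_add, add_mul, hx, hy]

lemma L7 (w : (A ⊗[ℂ] A) ⊗[ℂ] (A ⊗[ℂ] A)) :
    LinearMap.mul' ℂ (A ⊗[ℂ] A) w = Mmap ((TensorProduct.assoc ℂ A A (A ⊗[ℂ] A)) w) := by
  induction w using TensorProduct.induction_on with
  | zero => simp
  | tmul x y => rw [LinearMap.mul'_apply]; exact L6 x y
  | add x y hx hy => simp only [map_add, hx, hy]

lemma L8 (w : (A ⊗[ℂ] A) ⊗[ℂ] A) :
    (TensorProduct.assoc ℂ A A (A ⊗[ℂ] A))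
        (LinearMap.lTensor (A ⊗[ℂ] A) (Coalgebra.comul (R := ℂ)) w)
      = LinearMap.lTensor A (LinearMap.lTensor A (Coalgebra.comul (R := ℂ)))
          ((TensorProduct.assoc ℂ A A A) w) := by
  induction w using TensorProduct.induction_on with
  | zero => simp
  | tmul x c =>
    induction x using TensorProduct.induction_on with
    | zero => simp
    | tmul a b => simp
    | add x y hx hy => simp only [add_tmul, map_add, hx, hy]
  | add x y hx hy => simp only [map_add, hx, hy]

lemma L9 (a d : A) (z w : A ⊗[ℂ] A) :
    Mmap (a ⊗ₜ[ℂ] ((TensorProduct.assoc ℂ A A A) ((z * w) ⊗ₜ[ℂ] d)))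
      = TensorProduct.comm ℂ A A (c1 (a ⊗ₜ[ℂ] z))
          * c1 ((TensorProduct.assoc ℂ A A A) (w ⊗ₜ[ℂ] d)) := by
  induction z using TensorProduct.induction_on with
  | zero => simp
  | tmul p q =>
    induction w using TensorProduct.induction_on with
    | zero => simp
    | tmul r s => simp [Algebra.TensorProduct.tmul_mul_tmul, mul_assoc]
    | add x y hx hy => simp only [tmul_add, add_tmul, map_add, mul_add, add_mul, hx, hy]
  | add x y hx hy => simp only [tmul_add, add_tmul, map_add, mul_add, add_mul, hx, hy]

def Theta : A ⊗[ℂ] A →ₗ[ℂ] A ⊗[ℂ] (A ⊗[ℂ] A) :=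
  (TensorProduct.assoc ℂ A A A).toLinearMap ∘ₗ
    LinearMap.rTensor A (Coalgebra.comul (R := ℂ))

lemma Theta_tmul (a b : A) :
    Theta (a ⊗ₜ[ℂ] b)
      = (TensorProduct.assoc ℂ A A A) ((Coalgebra.comul (R := ℂ) a) ⊗ₜ[ℂ] b) := by
  simp [Theta]

lemma L10 (hmul : ∀ x y : A,
      Coalgebra.comul (R := ℂ) (x * y) = Coalgebra.comul x * Coalgebra.comul y)
    (u v : A ⊗[ℂ] A) :
    Mmap (LinearMap.lTensor A Theta
        ((TensorProduct.assoc ℂ A A A) (u ⊗ₜ[ℂ] (1 : A)) * ((1 : A) ⊗ₜ[ℂ] v)))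
      = TensorProduct.comm ℂ A A (c1 (LinearMap.lTensor A (Coalgebra.comul (R := ℂ)) u))
          * c1 (Theta v) := by
  induction u using TensorProduct.induction_on with
  | zero => simp
  | tmul a b =>
    induction v using TensorProduct.induction_on with
    | zero => simp
    | tmul c d =>
      rw [assoc_tmul, Algebra.TensorProduct.tmul_mul_tmul,
        Algebra.TensorProduct.tmul_mul_tmul, one_mul, mul_one,
        LinearMap.lTensor_tmul, Theta_tmul, hmul, LinearMap.lTensor_tmul, Theta_tmul]
      exact L9 a d (Coalgebra.comul b) (Coalgebra.comul c)
    | add x y hx hy => simp only [tmul_add, add_tmul, map_add, mul_add, add_mul, hx, hy]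
  | add x y hx hy => simp only [tmul_add, add_tmul, map_add, mul_add, add_mul, hx, hy]

end PreBialgebraAux4

open PreBialgebraAux4

theorem cocentral_idempotent_of_unit_axiom
    {A : Type*} [Ring A] [Algebra ℂ A] [FiniteDimensional ℂ A] [Coalgebra ℂ A]
    -- the comultiplication is multiplicative (pre-bialgebra condition):
    (hmul : ∀ x y : A,
      Coalgebra.comul (R := ℂ) (x * y) = Coalgebra.comul x * Coalgebra.comul y)
    -- the unit axiom `(Δ ⊗ id) (Δ 1) = (1 ⊗ Δ 1) * (Δ 1 ⊗ 1) = (Δ 1 ⊗ 1) * (1 ⊗ Δ 1)`: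
    (hunit₁ : (TensorProduct.assoc ℂ A A A)
        (LinearMap.rTensor A (Coalgebra.comul (R := ℂ)) (Coalgebra.comul (1 : A)))
      = ((1 : A) ⊗ₜ[ℂ] Coalgebra.comul (1 : A)) *
          ((TensorProduct.assoc ℂ A A A) (Coalgebra.comul (1 : A) ⊗ₜ[ℂ] (1 : A))))
    (hunit₂ : (TensorProduct.assoc ℂ A A A)
        (LinearMap.rTensor A (Coalgebra.comul (R := ℂ)) (Coalgebra.comul (1 : A)))
      = ((TensorProduct.assoc ℂ A A A) (Coalgebra.comul (1 : A) ⊗ₜ[ℂ] (1 : A))) *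
          ((1 : A) ⊗ₜ[ℂ] Coalgebra.comul (1 : A))) :
    -- `t := Σ_{(1)} 1₍₁₎ · 1₍₂₎` is cocentral and idempotent:
    (TensorProduct.comm ℂ A A)
        (Coalgebra.comul (R := ℂ) (LinearMap.mul' ℂ A (Coalgebra.comul (1 : A))))
      = Coalgebra.comul (R := ℂ) (LinearMap.mul' ℂ A (Coalgebra.comul (1 : A))) ∧
    LinearMap.mul' ℂ A (Coalgebra.comul (1 : A)) * LinearMap.mul' ℂ A (Coalgebra.comul (1 : A))
      = LinearMap.mul' ℂ A (Coalgebra.comul (1 : A)) := by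
  have hE : Coalgebra.comul (R := ℂ) (1 : A) * Coalgebra.comul (1 : A)
      = Coalgebra.comul (1 : A) := by
    have h := hmul 1 1
    rw [one_mul] at h
    exact h.symm
  have hidem : LinearMap.mul' ℂ A (Coalgebra.comul (1 : A))
        * LinearMap.mul' ℂ A (Coalgebra.comul (1 : A))
      = LinearMap.mul' ℂ A (Coalgebra.comul (1 : A)) := by
    rw [← L1 (Coalgebra.comul (1 : A)) (Coalgebra.comul (1 : A)), ← hunit₂, hunit₁,
      L2, hE]
  have hcoassoc : (TensorProduct.assoc ℂ A A A)
        (LinearMap.rTensor A (Coalgebra.comul (R := ℂ)) (Coalgebra.comul (1 : A)))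
      = LinearMap.lTensor A (Coalgebra.comul (R := ℂ)) (Coalgebra.comul (1 : A)) :=
    Coalgebra.coassoc_apply 1
  have hK : TensorProduct.comm ℂ A A (c1 ((TensorProduct.assoc ℂ A A A)
        (LinearMap.rTensor A (Coalgebra.comul (R := ℂ)) (Coalgebra.comul (1 : A)))))
      = c1 ((TensorProduct.assoc ℂ A A A)
        (LinearMap.rTensor A (Coalgebra.comul (R := ℂ)) (Coalgebra.comul (1 : A)))) := by
    rw [hunit₁]
    exact L3 (Coalgebra.comul (1 : A)) (Coalgebra.comul (1 : A))
  -- the comultiplication of `t`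
  have hDt : Coalgebra.comul (R := ℂ) (LinearMap.mul' ℂ A (Coalgebra.comul (1 : A)))
      = TensorProduct.comm ℂ A A (c1 ((TensorProduct.assoc ℂ A A A)
          (LinearMap.rTensor A (Coalgebra.comul (R := ℂ)) (Coalgebra.comul (1 : A)))))
        * c1 ((TensorProduct.assoc ℂ A A A)
          (LinearMap.rTensor A (Coalgebra.comul (R := ℂ)) (Coalgebra.comul (1 : A)))) := by
    rw [L5 hmul, L7]
    have hsplit : TensorProduct.map (Coalgebra.comul (R := ℂ)) (Coalgebra.comul (R := ℂ))
          (Coalgebra.comul (1 : A))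
        = LinearMap.lTensor (A ⊗[ℂ] A) (Coalgebra.comul (R := ℂ))
            (LinearMap.rTensor A (Coalgebra.comul (R := ℂ)) (Coalgebra.comul (1 : A))) := by
      rw [← LinearMap.lTensor_comp_rTensor]
      rfl
    rw [hsplit, L8, hcoassoc]
    have hfold : LinearMap.lTensor A (LinearMap.lTensor A (Coalgebra.comul (R := ℂ)))
          (LinearMap.lTensor A (Coalgebra.comul (R := ℂ)) (Coalgebra.comul (1 : A)))
        = LinearMap.lTensor A Theta ((TensorProduct.assoc ℂ A A A)
            (LinearMap.rTensor A (Coalgebra.comul (R := ℂ)) (Coalgebra.comul (1 : A)))) := by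
      rw [hcoassoc, ← LinearMap.lTensor_comp_apply, ← LinearMap.lTensor_comp_apply]
      congr 1
      rw [Theta, LinearMap.comp_assoc, Coalgebra.coassoc]
    rw [hfold, hunit₂, L10 hmul]
    have hTheta : Theta (Coalgebra.comul (1 : A)) = (TensorProduct.assoc ℂ A A A)
        (LinearMap.rTensor A (Coalgebra.comul (R := ℂ)) (Coalgebra.comul (1 : A))) := by
      simp [Theta]
    rw [hTheta, ← hcoassoc]
  constructor
  · rw [hDt, comm_mul, comm_comm, hK]
  · exact hidem

end
end

section
/- Let A be a pre-bialgebra over ℂ satisfying the unit axiom, and set t := Σ_{(1)} 1₍₁₎·1₍₂₎ ∈ A. Then t acts as a two-sided unit on the cocentral elements of A: for every τ ∈ A with flip(Δ(τ)) = Δ(τ), one has t·τ = τ and τ·t = τ. -/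
/-!
Write `Δ 1 = Σ 1₁ ⊗ 1₂`. Applying `id ⊗ Δ` to `Δ 1 * (1 ⊗ τ)` and then contracting the middle
factor with `ε` and multiplying out recovers `t * τ`. On the other hand, coassociativity and the
unit axiom rewrite `(id ⊗ Δ) (Δ 1)` as `(Δ 1 ⊗ 1) * (1 ⊗ Δ 1)`, and `Δ 1 * Δ τ = Δ τ`; after the
same contraction this leaves `Σ ε(1₂ τ₁) 1₁ τ₂`, the `ε`-contraction of `Δ 1 * flip (Δ τ)`.
For cocentral `τ` this is the contraction of `Δ τ`, i.e. `τ`. The identity `τ * t = τ` is the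
mirror image, with `Δ ⊗ id` in place of `id ⊗ Δ`.
-/

open TensorProduct

namespace LinearMap

variable {R A B C : Type*} [CommSemiring R] [Semiring A] [Algebra R A]
  [Semiring B] [Algebra R B] [Semiring C] [Algebra R C]

theorem lTensor_mul_of_map_mul (f : B →ₗ[R] C) (hf : ∀ x y, f (x * y) = f x * f y)
    (P Q : A ⊗[R] B) : f.lTensor A (P * Q) = f.lTensor A P * f.lTensor A Q := by
  induction P using TensorProduct.induction_on with
  | zero => simp
  | add x y hx hy => simp [add_mul, hx, hy]
  | tmul a b =>
    induction Q using TensorProduct.induction_on with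
    | zero => simp
    | add x y hx hy => simp [mul_add, hx, hy]
    | tmul c d => simp [hf]

theorem rTensor_mul_of_map_mul (f : B →ₗ[R] C) (hf : ∀ x y, f (x * y) = f x * f y)
    (P Q : B ⊗[R] A) : f.rTensor A (P * Q) = f.rTensor A P * f.rTensor A Q := by
  induction P using TensorProduct.induction_on with
  | zero => simp
  | add x y hx hy => simp [add_mul, hx, hy]
  | tmul a b =>
    induction Q using TensorProduct.induction_on with
    | zero => simp
    | add x y hx hy => simp [mul_add, hx, hy]
    | tmul c d => simp [hf]

theorem mul'_mul_one_tmul (P : A ⊗[R] A) (a : A) :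
    mul' R A (P * (1 ⊗ₜ a)) = mul' R A P * a := by
  induction P using TensorProduct.induction_on with
  | zero => simp
  | add x y hx hy => simp [add_mul, hx, hy]
  | tmul b c => simp [mul_assoc]

theorem mul'_tmul_one_mul (P : A ⊗[R] A) (a : A) :
    mul' R A ((a ⊗ₜ 1) * P) = a * mul' R A P := by
  induction P using TensorProduct.induction_on with
  | zero => simp
  | add x y hx hy => simp [mul_add, hx, hy]
  | tmul b c => simp [mul_assoc]

end LinearMap

namespace Coalgebra

variable {R A : Type*} [CommSemiring R] [Semiring A] [Algebra R A] [Coalgebra R A]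

variable (R A) in
def counitLeft : A ⊗[R] A →ₗ[R] A :=
  (_root_.TensorProduct.lid R A).toLinearMap ∘ₗ counit.rTensor A

variable (R A) in
def counitRight : A ⊗[R] A →ₗ[R] A :=
  (_root_.TensorProduct.rid R A).toLinearMap ∘ₗ counit.lTensor A

@[simp]
theorem counitLeft_tmul (a b : A) : counitLeft R A (a ⊗ₜ b) = counit (R := R) a • b := by
  simp [counitLeft]

@[simp]
theorem counitRight_tmul (a b : A) : counitRight R A (a ⊗ₜ b) = counit (R := R) b • a := by
  simp [counitRight]

@[simp]
theorem counitLeft_comul (a : A) : counitLeft R A (comul a) = a := by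
  simp [counitLeft, rTensor_counit_comul]

@[simp]
theorem counitRight_comul (a : A) : counitRight R A (comul a) = a := by
  simp [counitRight, lTensor_counit_comul]

variable (R A) in
def mulCounitMiddle : A ⊗[R] (A ⊗[R] A) →ₗ[R] A :=
  LinearMap.mul' R A ∘ₗ (counitLeft R A).lTensor A

variable (R A) in
def mulCounitMiddle' : (A ⊗[R] A) ⊗[R] A →ₗ[R] A :=
  LinearMap.mul' R A ∘ₗ (counitRight R A).rTensor A

theorem mulCounitMiddle_lTensor_comul (P : A ⊗[R] A) :
    mulCounitMiddle R A (comul.lTensor A P) = LinearMap.mul' R A P := by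
  induction P using TensorProduct.induction_on with
  | zero => simp
  | add x y hx hy => simp [hx, hy]
  | tmul a b => simp [mulCounitMiddle]

theorem mulCounitMiddle'_rTensor_comul (P : A ⊗[R] A) :
    mulCounitMiddle' R A (comul.rTensor A P) = LinearMap.mul' R A P := by
  induction P using TensorProduct.induction_on with
  | zero => simp
  | add x y hx hy => simp [hx, hy]
  | tmul a b => simp [mulCounitMiddle']

theorem mulCounitMiddle_assoc_mul (P Q : A ⊗[R] A) :
    mulCounitMiddle R A (_root_.TensorProduct.assoc R A A A (P ⊗ₜ 1) * (1 ⊗ₜ Q)) =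
      counitRight R A (P * _root_.TensorProduct.comm R A A Q) := by
  induction P using TensorProduct.induction_on with
  | zero => simp
  | add x y hx hy => simp only [add_tmul, add_mul, map_add, hx, hy]
  | tmul a b =>
    induction Q using TensorProduct.induction_on with
    | zero => simp
    | add x y hx hy => simp only [tmul_add, mul_add, map_add, hx, hy]
    | tmul c d => simp [mulCounitMiddle]

theorem mulCounitMiddle'_mul_assoc_symm (P Q : A ⊗[R] A) :
    mulCounitMiddle' R A ((Q ⊗ₜ 1) * (_root_.TensorProduct.assoc R A A A).symm (1 ⊗ₜ P)) =
      counitLeft R A (_root_.TensorProduct.comm R A A Q * P) := by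
  induction P using TensorProduct.induction_on with
  | zero => simp
  | add x y hx hy => simp only [tmul_add, mul_add, map_add, hx, hy]
  | tmul a b =>
    induction Q using TensorProduct.induction_on with
    | zero => simp
    | add x y hx hy => simp only [add_tmul, add_mul, map_add, hx, hy]
    | tmul c d => simp [mulCounitMiddle']

section Cocentral

variable (hmul : ∀ x y : A, comul (R := R) (x * y) = comul x * comul y)
  (hunit : _root_.TensorProduct.assoc R A A A (comul.rTensor A (comul (1 : A))) =
    _root_.TensorProduct.assoc R A A A (comul (1 : A) ⊗ₜ 1) * (1 ⊗ₜ comul (1 : A)))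
  {τ : A} (hτ : _root_.TensorProduct.comm R A A (comul τ) = comul τ)
include hmul hunit hτ

theorem mul'_comul_one_mul_of_comm_comul :
    LinearMap.mul' R A (comul (1 : A)) * τ = τ := by
  have hcomul_one_mul : comul (R := R) (1 : A) * comul τ = comul τ := by rw [← hmul, one_mul]
  calc LinearMap.mul' R A (comul (1 : A)) * τ
      = mulCounitMiddle R A (comul.lTensor A (comul (1 : A) * (1 ⊗ₜ τ))) := by
        rw [mulCounitMiddle_lTensor_comul, LinearMap.mul'_mul_one_tmul]
    _ = mulCounitMiddle R A
          (_root_.TensorProduct.assoc R A A A (comul (1 : A) ⊗ₜ 1) * (1 ⊗ₜ comul τ)) := by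
        rw [LinearMap.lTensor_mul_of_map_mul _ hmul, LinearMap.lTensor_tmul, ← coassoc_apply,
          hunit, mul_assoc, Algebra.TensorProduct.tmul_mul_tmul, one_mul, hcomul_one_mul]
    _ = τ := by
        rw [mulCounitMiddle_assoc_mul, hτ, hcomul_one_mul, counitRight_comul]

theorem mul_mul'_comul_one_of_comm_comul :
    τ * LinearMap.mul' R A (comul (1 : A)) = τ := by
  have hcomul_mul_one : comul (R := R) τ * comul (1 : A) = comul τ := by rw [← hmul, mul_one]
  have hunit' : comul.rTensor A (comul (1 : A)) = (comul (R := R) (1 : A) ⊗ₜ 1) *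
      (_root_.TensorProduct.assoc R A A A).symm (1 ⊗ₜ comul (1 : A)) := by
    have assoc_symm_mul : ∀ x y : A ⊗[R] (A ⊗[R] A),
        (_root_.TensorProduct.assoc R A A A).symm (x * y) =
          (_root_.TensorProduct.assoc R A A A).symm x *
            (_root_.TensorProduct.assoc R A A A).symm y :=
      map_mul (Algebra.TensorProduct.assoc R R R A A A).symm
    simpa only [LinearEquiv.symm_apply_apply, assoc_symm_mul] using
      congrArg (_root_.TensorProduct.assoc R A A A).symm hunit
  calc τ * LinearMap.mul' R A (comul (1 : A))
      = mulCounitMiddle' R A (comul.rTensor A ((τ ⊗ₜ 1) * comul (1 : A))) := by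
        rw [mulCounitMiddle'_rTensor_comul, LinearMap.mul'_tmul_one_mul]
    _ = mulCounitMiddle' R A
          ((comul τ ⊗ₜ 1) * (_root_.TensorProduct.assoc R A A A).symm (1 ⊗ₜ comul (1 : A))) := by
        rw [LinearMap.rTensor_mul_of_map_mul _ hmul, LinearMap.rTensor_tmul, hunit', ← mul_assoc,
          Algebra.TensorProduct.tmul_mul_tmul, mul_one, hcomul_mul_one]
    _ = τ := by
        rw [mulCounitMiddle'_mul_assoc_symm, hτ, hcomul_mul_one, counitLeft_comul]

end Cocentral

end Coalgebra

theorem unit_on_cocentral_of_unit_axiom_general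
    {A : Type*} [Ring A] [Algebra ℂ A] [Coalgebra ℂ A]
    -- the comultiplication is multiplicative (pre-bialgebra condition):
    (hmul : ∀ x y : A,
      Coalgebra.comul (R := ℂ) (x * y) = Coalgebra.comul x * Coalgebra.comul y)
    -- the unit axiom `(Δ ⊗ id) (Δ 1) = (1 ⊗ Δ 1) * (Δ 1 ⊗ 1) = (Δ 1 ⊗ 1) * (1 ⊗ Δ 1)`:
    (hunit₂ : (TensorProduct.assoc ℂ A A A)
        (LinearMap.rTensor A (Coalgebra.comul (R := ℂ)) (Coalgebra.comul (1 : A)))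
      = ((TensorProduct.assoc ℂ A A A) (Coalgebra.comul (1 : A) ⊗ₜ[ℂ] (1 : A))) *
          ((1 : A) ⊗ₜ[ℂ] Coalgebra.comul (1 : A))) :
    ∀ τ : A, (TensorProduct.comm ℂ A A) (Coalgebra.comul τ) = Coalgebra.comul τ →
      LinearMap.mul' ℂ A (Coalgebra.comul (1 : A)) * τ = τ ∧
      τ * LinearMap.mul' ℂ A (Coalgebra.comul (1 : A)) = τ :=
  fun _ hτ => ⟨Coalgebra.mul'_comul_one_mul_of_comm_comul hmul hunit₂ hτ,
    Coalgebra.mul_mul'_comul_one_of_comm_comul hmul hunit₂ hτ⟩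

theorem unit_on_cocentral_of_unit_axiom
    {A : Type*} [Ring A] [Algebra ℂ A] [FiniteDimensional ℂ A] [Coalgebra ℂ A]
    -- the comultiplication is multiplicative (pre-bialgebra condition):
    (hmul : ∀ x y : A,
      Coalgebra.comul (R := ℂ) (x * y) = Coalgebra.comul x * Coalgebra.comul y)
    -- the unit axiom `(Δ ⊗ id) (Δ 1) = (1 ⊗ Δ 1) * (Δ 1 ⊗ 1) = (Δ 1 ⊗ 1) * (1 ⊗ Δ 1)`:
    (hunit₁ : (TensorProduct.assoc ℂ A A A)
        (LinearMap.rTensor A (Coalgebra.comul (R := ℂ)) (Coalgebra.comul (1 : A)))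
      = ((1 : A) ⊗ₜ[ℂ] Coalgebra.comul (1 : A)) *
          ((TensorProduct.assoc ℂ A A A) (Coalgebra.comul (1 : A) ⊗ₜ[ℂ] (1 : A))))
    (hunit₂ : (TensorProduct.assoc ℂ A A A)
        (LinearMap.rTensor A (Coalgebra.comul (R := ℂ)) (Coalgebra.comul (1 : A)))
      = ((TensorProduct.assoc ℂ A A A) (Coalgebra.comul (1 : A) ⊗ₜ[ℂ] (1 : A))) *
          ((1 : A) ⊗ₜ[ℂ] Coalgebra.comul (1 : A))) :
    ∀ τ : A, (TensorProduct.comm ℂ A A) (Coalgebra.comul τ) = Coalgebra.comul τ →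
      LinearMap.mul' ℂ A (Coalgebra.comul (1 : A)) * τ = τ ∧
      τ * LinearMap.mul' ℂ A (Coalgebra.comul (1 : A)) = τ :=
  unit_on_cocentral_of_unit_axiom_general hmul hunit₂
end
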